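/- arXiv:2508.13931 — 2 statements merged into one kernel-verified Lean document; each statement's English description precedes it below -/
import Mathlib

section
/- Let k ≥ 0 and m > k be integers, let μ be a probability measure on ℝ with μ([0,k]) = 1, and let f : [0,1] → ℝ be continuous. Then for every x ∈ [0,1], |L_{m,k}(f;x) − f(x)| ≤ 2k·ω(f; 1/m) + (3/2)·ω₂(f; σ(x)/√m). -/
/-!
Put `n = m - k` and `c = n x / m`. Replacing each `∫ f((l+t)/m) dμ(t)` by `f(l/m)`, and `f(c)` by
`f(x)`, moves the argument of `f` by at most `k/m`, which costs `k ω(f; 1/m)` each time. What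
remains, `Σ p_{n,l}(x) f(l/m) - f(c)`, is the error of a discrete measure with barycenter `c`, and
for such measures `|Σ w_l (f(y_l) - f(c))| ≤ Σ w_l (1 + (y_l - c)²/(2h²)) ω₂(f; h)`. A separating
line through `(c, 0)` reduces this to two-point measures, i.e. to the bound
`(1 + (c - a)(b - c)/(2h²)) ω₂(f; h)` for linear interpolation between `a` and `b`, which follows
from a discrete maximum principle against a quadratic barrier. The nodes `l/m` have variance
`n x(1-x)/m²`, so at `h = σ(x)/√m` the weights sum to `1 + n/(2m) ≤ 3/2`.
-/

open Set Finset MeasureTheory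

/-- Bernstein basis polynomial `p_{m,k}(x) = C(m,k) x^k (1-x)^{m-k}`. -/
noncomputable def bern (m k : ℕ) (x : ℝ) : ℝ :=
  (m.choose k : ℝ) * x ^ k * (1 - x) ^ (m - k)

/-- `σ(x) = √(x(1-x))`. -/
noncomputable def sigm (x : ℝ) : ℝ := Real.sqrt (x * (1 - x))

/-- The first modulus of continuity of `f` on `[0,1]`. -/
noncomputable def omega1 (f : ℝ → ℝ) (δ : ℝ) : ℝ :=
  sSup {v | ∃ x y : ℝ, x ∈ Set.Icc (0:ℝ) 1 ∧ y ∈ Set.Icc (0:ℝ) 1 ∧ |x - y| ≤ δ ∧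
    v = |f x - f y|}

/-- The second modulus of continuity of `f` on `[0,1]`. -/
noncomputable def omega2 (f : ℝ → ℝ) (δ : ℝ) : ℝ :=
  sSup {v | ∃ x h : ℝ, 0 ≤ h ∧ h ≤ δ ∧ x - h ∈ Set.Icc (0:ℝ) 1 ∧ x + h ∈ Set.Icc (0:ℝ) 1 ∧
    v = |f (x + h) - 2 * f x + f (x - h)|}

/-- Bernstein–Kantorovich type operator
`L_{m,k}(f;x) = Σ_{l=0}^{m-k} p_{m-k,l}(x) ∫ f((l+t)/m) dμ(t)`. -/
noncomputable def Lop (m k : ℕ) (μ : Measure ℝ) (f : ℝ → ℝ) (x : ℝ) : ℝ :=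
  ∑ l ∈ Finset.range (m - k + 1), bern (m - k) l x * ∫ t, f (((l : ℝ) + t) / m) ∂μ

section Moduli

variable {f : ℝ → ℝ}

lemma abs_sub_le_omega1 (hf : ContinuousOn f (Icc 0 1)) {δ x y : ℝ}
    (hx : x ∈ Icc (0:ℝ) 1) (hy : y ∈ Icc (0:ℝ) 1) (hxy : |x - y| ≤ δ) :
    |f x - f y| ≤ omega1 f δ := by
  obtain ⟨C, hC⟩ := isCompact_Icc.exists_bound_of_continuousOn hf
  refine le_csSup ⟨C + C, ?_⟩ ⟨x, y, hx, hy, hxy, rfl⟩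
  rintro _ ⟨x, y, hx, hy, -, rfl⟩
  exact (abs_sub _ _).trans (add_le_add (hC x hx) (hC y hy))

lemma abs_sub_le_nat_mul_omega1 (hf : ContinuousOn f (Icc 0 1)) {δ : ℝ} (j : ℕ) {x y : ℝ}
    (hx : x ∈ Icc (0:ℝ) 1) (hy : y ∈ Icc (0:ℝ) 1) (hxy : |x - y| ≤ j * δ) :
    |f x - f y| ≤ j * omega1 f δ := by
  induction j generalizing x with
  | zero =>
    obtain rfl : x = y := by simpa [sub_eq_zero] using hxy
    simp
  | succ j ih =>
    have hj : (0:ℝ) < j + 1 := by positivity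
    set z := (y + j * x) / (j + 1) with hz
    have hz01 : z ∈ Icc (0:ℝ) 1 := by
      constructor
      · rw [hz]; have := hx.1; have := hy.1; positivity
      · rw [hz, div_le_one hj]; nlinarith [hx.2, hy.2]
    have hxz : x - z = (x - y) / (j + 1) := by rw [hz]; field_simp; ring
    have hzy : z - y = j * ((x - y) / (j + 1)) := by rw [hz]; field_simp; ring
    have hstep : |x - y| / (j + 1) ≤ δ := by
      rw [div_le_iff₀ hj]; push_cast at hxy; linarith
    calc |f x - f y| ≤ |f x - f z| + |f z - f y| := abs_sub_le _ _ _
      _ ≤ omega1 f δ + j * omega1 f δ := by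
        refine add_le_add (abs_sub_le_omega1 hf hx hz01 ?_) (ih hz01 ?_)
        · rwa [hxz, abs_div, abs_of_pos hj]
        · rw [hzy, abs_mul, Nat.abs_cast, abs_div, abs_of_pos hj]
          exact mul_le_mul_of_nonneg_left hstep j.cast_nonneg
      _ = (j + 1 : ℕ) * omega1 f δ := by push_cast; ring

lemma abs_second_diff_le_omega2 (hf : ContinuousOn f (Icc 0 1)) {δ x r : ℝ}
    (hr : 0 ≤ r) (hrδ : r ≤ δ) (hm : x - r ∈ Icc (0:ℝ) 1) (hp : x + r ∈ Icc (0:ℝ) 1) :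
    |f (x + r) - 2 * f x + f (x - r)| ≤ omega2 f δ := by
  obtain ⟨C, hC⟩ := isCompact_Icc.exists_bound_of_continuousOn hf
  refine le_csSup ⟨C + 2 * C + C, ?_⟩ ⟨x, r, hr, hrδ, hm, hp, rfl⟩
  rintro _ ⟨x, r, -, -, hm, hp, rfl⟩
  have hx : x ∈ Icc (0:ℝ) 1 := ⟨by linarith [hm.1, hp.1], by linarith [hm.2, hp.2]⟩
  have h1 := hC _ hp; have h2 := hC _ hx; have h3 := hC _ hm
  simp only [Real.norm_eq_abs] at h1 h2 h3
  calc |f (x + r) - 2 * f x + f (x - r)| ≤ |f (x + r)| + 2 * |f x| + |f (x - r)| := by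
        have := abs_add_le (f (x + r) - 2 * f x) (f (x - r))
        have := abs_sub (f (x + r)) (2 * f x)
        rw [abs_mul, abs_two] at this
        linarith
    _ ≤ C + 2 * C + C := by gcongr

lemma omega2_nonneg (hf : ContinuousOn f (Icc 0 1)) {δ : ℝ} (hδ : 0 ≤ δ) : 0 ≤ omega2 f δ := by
  simpa [show f 0 - 2 * f 0 + f 0 = 0 by ring] using
    abs_second_diff_le_omega2 hf (x := 0) le_rfl hδ (by simp) (by simp)

lemma omega2_neg (f : ℝ → ℝ) (δ : ℝ) : omega2 (-f) δ = omega2 f δ := by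
  unfold omega2
  congr 1
  ext v
  refine exists₂_congr fun x r => ?_
  simp only [Pi.neg_apply, and_congr_right_iff]
  intros
  rw [← abs_neg]
  ring_nf

end Moduli

/-- If all maximum points were farther than `h` from both endpoints, the rightmost one `t` would
make `t + h` a maximum point too. -/
lemma exists_isMaxOn_Icc_near_endpoint {G : ℝ → ℝ} {a b h : ℝ} (hab : a ≤ b) (hh : 0 < h)
    (hG : ContinuousOn G (Icc a b))
    (hmid : ∀ t, a ≤ t - h → t + h ≤ b → 2 * G t ≤ G (t - h) + G (t + h)) :
    ∃ t ∈ Icc a b, min (t - a) (b - t) ≤ h ∧ IsMaxOn G (Icc a b) t := by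
  obtain ⟨t₀, ht₀, hmax₀⟩ := isCompact_Icc.exists_isMaxOn (nonempty_Icc.2 hab) hG
  set K := Icc a b ∩ G ⁻¹' Ici (G t₀)
  have hK : IsCompact K :=
    isCompact_Icc.of_isClosed_subset (hG.preimage_isClosed_of_isClosed isClosed_Icc isClosed_Ici)
      inter_subset_left
  obtain ⟨t, ⟨ht, htmax⟩, hgreatest⟩ := hK.exists_isGreatest ⟨t₀, ht₀, le_refl (G t₀)⟩
  have hmaxt : IsMaxOn G (Icc a b) t := fun s hs => show G s ≤ G t from (hmax₀ hs).trans htmax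
  refine ⟨t, ht, ?_, hmaxt⟩
  by_contra! hfar
  obtain ⟨hta, hbt⟩ := lt_min_iff.1 hfar
  have hright : t + h ∈ Icc a b := ⟨by linarith [ht.1], by linarith⟩
  have := hmid t (by linarith) (by linarith)
  have : G (t - h) ≤ G t := hmaxt ⟨by linarith, by linarith [ht.2]⟩
  have : G t₀ ≤ G t := htmax
  have := hgreatest ⟨hright, show G t₀ ≤ G (t + h) by linarith⟩
  linarith

/-- Maximum principle for the linear interpolant minus `f`, against the barrier
`ω (1 + (t - a)(b - t)/(2h²))`, whose second difference at step `h` is exactly `-ω`. -/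
lemma interpolant_sub_le_omega2 {f : ℝ → ℝ} (hf : ContinuousOn f (Icc 0 1)) {a b c h : ℝ}
    (hh : 0 < h) (ha : 0 ≤ a) (hab : a < b) (hb : b ≤ 1) (hc : c ∈ Icc a b) :
    f a + (c - a) * (f b - f a) / (b - a) - f c ≤
      (1 + (c - a) * (b - c) / (2 * h ^ 2)) * omega2 f h := by
  set ω := omega2 f h
  have hω : 0 ≤ ω := omega2_nonneg hf hh.le
  have hba : b - a ≠ 0 := by linarith
  set G : ℝ → ℝ := fun t =>
    f a + (t - a) * (f b - f a) / (b - a) - f t - (1 + (t - a) * (b - t) / (2 * h ^ 2)) * ω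
  have hGa : G a = -ω := by simp [G]
  have hGb : G b = -ω := by simp only [G]; field_simp; ring
  have hsub : Icc a b ⊆ Icc (0:ℝ) 1 := Icc_subset_Icc ha hb
  have hsecond : ∀ t r, 0 ≤ r → r ≤ h → a ≤ t - r → t + r ≤ b →
      2 * G t ≤ G (t - r) + G (t + r) + ω - r ^ 2 / h ^ 2 * ω := by
    intro t r hr hrh htr htr'
    have hΔ := abs_le.1 (abs_second_diff_le_omega2 hf hr hrh
      (hsub ⟨htr, by linarith⟩) (hsub ⟨by linarith, htr'⟩))
    have hG : G (t - r) + G (t + r) - 2 * G t =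
        -(f (t + r) - 2 * f t + f (t - r)) + r ^ 2 / h ^ 2 * ω := by
      simp only [G]; field_simp; ring
    linarith [hΔ.1]
  have hGcont : ContinuousOn G (Icc a b) := by
    refine ContinuousOn.sub (ContinuousOn.sub (by fun_prop) (hf.mono hsub)) (by fun_prop)
  obtain ⟨t, ht, hnear, hmax⟩ := exists_isMaxOn_Icc_near_endpoint hab.le hh hGcont
    fun t h₁ h₂ => by
      have := hsecond t h hh.le le_rfl h₁ h₂
      rwa [div_self (by positivity), one_mul, add_sub_cancel_right] at this
  -- With `r` the distance from `t` to the nearer endpoint, `t ± r` hits an endpoint where `G = -ω`.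
  have hGt : G t ≤ 0 := by
    rcases min_cases (t - a) (b - t) with ⟨hmin, hle⟩ | ⟨hmin, hlt⟩ <;> rw [hmin] at hnear
    · have key := hsecond t (t - a) (by linarith [ht.1]) hnear (by linarith) (by linarith)
      have : G (t + (t - a)) ≤ G t := hmax ⟨by linarith [ht.1], by linarith⟩
      have : 0 ≤ (t - a) ^ 2 / h ^ 2 * ω := by positivity
      rw [sub_sub_cancel, hGa] at key
      linarith
    · have key := hsecond t (b - t) (by linarith [ht.2]) hnear (by linarith) (by linarith)
      have : G (t - (b - t)) ≤ G t := hmax ⟨by linarith, by linarith [ht.2]⟩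
      have : 0 ≤ (b - t) ^ 2 / h ^ 2 * ω := by positivity
      rw [add_sub_cancel, hGb] at key
      linarith
  have := (hmax hc).trans hGt
  simp only [G] at this
  linarith

lemma Finset.exists_forall_le_and_forall_le {ι α : Type*} [LinearOrder α] [Nonempty α]
    (s : Finset ι) {P Q : ι → Prop} {u : ι → α}
    (h : ∀ i ∈ s, ∀ j ∈ s, P i → Q j → u i ≤ u j) :
    ∃ l, (∀ i ∈ s, P i → u i ≤ l) ∧ ∀ j ∈ s, Q j → l ≤ u j := by
  classical
  by_cases hP : ∃ i ∈ s, P i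
  · obtain ⟨i, hi, hPi⟩ := hP
    obtain ⟨i₀, hi₀, hmax⟩ := (s.filter P).exists_max_image u ⟨i, Finset.mem_filter.2 ⟨hi, hPi⟩⟩
    rw [Finset.mem_filter] at hi₀
    exact ⟨u i₀, fun i hi hPi => hmax i (Finset.mem_filter.2 ⟨hi, hPi⟩),
      fun j hj hQj => h _ hi₀.1 _ hj hi₀.2 hQj⟩
  · push Not at hP
    obtain ⟨l, hl⟩ := (s.image u).bddBelow
    exact ⟨l, fun i hi hPi => absurd hPi (hP i hi),
      fun j hj _ => hl (Finset.mem_coe.2 (Finset.mem_image_of_mem u hj))⟩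

/-- The two-point condition orders the slopes `g (y i) / (y i - c)` on either side of `c`, so a
line through `(c, 0)` lies above `g` at every `y i`; its weighted sum vanishes by the barycenter
condition. -/
lemma sum_mul_nonpos_of_two_point {ι : Type*} {s : Finset ι} {w y : ι → ℝ} {g : ℝ → ℝ} {c : ℝ}
    (hw : ∀ i ∈ s, 0 ≤ w i) (hbar : ∑ i ∈ s, w i * (y i - c) = 0) (hgc : g c ≤ 0)
    (hg : ∀ i ∈ s, ∀ j ∈ s, y i < c → c < y j →
      (y j - c) * g (y i) + (c - y i) * g (y j) ≤ 0) :
    ∑ i ∈ s, w i * g (y i) ≤ 0 := by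
  obtain ⟨l, hup, hlow⟩ := s.exists_forall_le_and_forall_le (P := fun j => c < y j)
    (Q := fun i => y i < c) (u := fun i => g (y i) / (y i - c)) fun j hj i hi hcj hic => by
      have := hg i hi j hj hic hcj
      rw [le_div_iff_of_neg (by linarith), div_mul_eq_mul_div, le_div_iff₀ (by linarith)]
      linarith
  have hline : ∀ i ∈ s, g (y i) ≤ l * (y i - c) := by
    intro i hi
    rcases lt_trichotomy (y i) c with hlt | heq | hgt
    · exact (le_div_iff_of_neg (by linarith)).1 (hlow i hi hlt)
    · rw [heq, sub_self, mul_zero]; exact hgc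
    · exact (div_le_iff₀ (by linarith)).1 (hup i hi hgt)
  calc ∑ i ∈ s, w i * g (y i) ≤ ∑ i ∈ s, w i * (l * (y i - c)) :=
        Finset.sum_le_sum fun i hi => mul_le_mul_of_nonneg_left (hline i hi) (hw i hi)
    _ = l * ∑ i ∈ s, w i * (y i - c) := by
        rw [Finset.mul_sum]; exact Finset.sum_congr rfl fun i _ => by ring
    _ = 0 := by rw [hbar, mul_zero]

lemma sum_mul_sub_le_omega2 {ι : Type*} {s : Finset ι} {w y : ι → ℝ} {f : ℝ → ℝ} {c h : ℝ}
    (hf : ContinuousOn f (Icc 0 1)) (hh : 0 < h) (hw : ∀ i ∈ s, 0 ≤ w i)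
    (hy : ∀ i ∈ s, y i ∈ Icc (0:ℝ) 1) (hbar : ∑ i ∈ s, w i * (y i - c) = 0) :
    ∑ i ∈ s, w i * (f (y i) - f c) ≤
      (∑ i ∈ s, w i * (1 + (y i - c) ^ 2 / (2 * h ^ 2))) * omega2 f h := by
  set ω := omega2 f h
  set Q : ℝ → ℝ := fun t => 1 + (t - c) ^ 2 / (2 * h ^ 2)
  have key := sum_mul_nonpos_of_two_point (g := fun t => f t - f c - Q t * ω) hw hbar
    (by simpa [Q] using omega2_nonneg hf hh.le) fun i hi j hj hic hcj => by
      have hi01 := hy i hi; have hj01 := hy j hj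
      have hinterp := interpolant_sub_le_omega2 hf hh hi01.1 (hic.trans hcj) hj01.2
        ⟨hic.le, hcj.le⟩
      have hba : 0 < y j - y i := by linarith
      have e : (y j - c) * (f (y i) - f c - Q (y i) * ω) + (c - y i) * (f (y j) - f c - Q (y j) * ω)
          = (y j - y i) * (f (y i) + (c - y i) * (f (y j) - f (y i)) / (y j - y i) - f c
            - (1 + (c - y i) * (y j - c) / (2 * h ^ 2)) * ω) := by
        simp only [Q]; field_simp; ring
      rw [e]
      exact mul_nonpos_of_nonneg_of_nonpos hba.le (by linarith)
  calc ∑ i ∈ s, w i * (f (y i) - f c)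
      = ∑ i ∈ s, (w i * (f (y i) - f c - Q (y i) * ω) + w i * Q (y i) * ω) :=
        Finset.sum_congr rfl fun i _ => by ring
    _ ≤ (∑ i ∈ s, w i * Q (y i)) * ω := by
        rw [Finset.sum_add_distrib, ← Finset.sum_mul]; linarith

lemma abs_sum_mul_sub_le_omega2 {ι : Type*} {s : Finset ι} {w y : ι → ℝ} {f : ℝ → ℝ} {c h : ℝ}
    (hf : ContinuousOn f (Icc 0 1)) (hh : 0 < h) (hw : ∀ i ∈ s, 0 ≤ w i)
    (hy : ∀ i ∈ s, y i ∈ Icc (0:ℝ) 1) (hbar : ∑ i ∈ s, w i * (y i - c) = 0) :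
    |∑ i ∈ s, w i * (f (y i) - f c)| ≤
      (∑ i ∈ s, w i * (1 + (y i - c) ^ 2 / (2 * h ^ 2))) * omega2 f h := by
  have hneg := sum_mul_sub_le_omega2 hf.neg hh hw hy hbar
  rw [omega2_neg] at hneg
  simp only [Pi.neg_apply, neg_sub_neg] at hneg
  refine abs_le.2 ⟨?_, sum_mul_sub_le_omega2 hf hh hw hy hbar⟩
  have : ∑ i ∈ s, w i * (f c - f (y i)) = -∑ i ∈ s, w i * (f (y i) - f c) := by
    rw [← Finset.sum_neg_distrib]; exact Finset.sum_congr rfl fun i _ => by ring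
  linarith

lemma sum_mul_sub_eq_zero_of_sum_mul_sq_eq_zero {ι : Type*} {s : Finset ι} {w y : ι → ℝ}
    {c : ℝ} (g : ℝ → ℝ) (hw : ∀ i ∈ s, 0 ≤ w i) (hvar : ∑ i ∈ s, w i * (y i - c) ^ 2 = 0) :
    ∑ i ∈ s, w i * (g (y i) - g c) = 0 := by
  refine Finset.sum_eq_zero fun i hi => ?_
  rcases mul_eq_zero.1 ((Finset.sum_eq_zero_iff_of_nonneg fun i hi =>
      mul_nonneg (hw i hi) (sq_nonneg _)).1 hvar i hi) with h0 | h0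
  · rw [h0, zero_mul]
  · rw [pow_eq_zero_iff two_ne_zero, sub_eq_zero] at h0
    rw [h0, sub_self, mul_zero]

lemma abs_sum_mul_le_of_sum_eq_one {ι : Type*} {s : Finset ι} {w a : ι → ℝ} {B : ℝ}
    (hw : ∀ i ∈ s, 0 ≤ w i) (hsum : ∑ i ∈ s, w i = 1) (ha : ∀ i ∈ s, |a i| ≤ B) :
    |∑ i ∈ s, w i * a i| ≤ B :=
  calc |∑ i ∈ s, w i * a i| ≤ ∑ i ∈ s, |w i * a i| := Finset.abs_sum_le_sum_abs _ _
    _ ≤ ∑ i ∈ s, w i * B := Finset.sum_le_sum fun i hi => by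
        rw [abs_mul, abs_of_nonneg (hw i hi)]; exact mul_le_mul_of_nonneg_left (ha i hi) (hw i hi)
    _ = B := by rw [← Finset.sum_mul, hsum, one_mul]

lemma bern_eq_eval (n l : ℕ) (x : ℝ) : bern n l x = (bernsteinPolynomial ℝ n l).eval x := by
  simp [bernsteinPolynomial, bern]

lemma bern_nonneg {n l : ℕ} {x : ℝ} (hx : x ∈ Icc (0:ℝ) 1) : 0 ≤ bern n l x := by
  have : 0 ≤ 1 - x := sub_nonneg.2 hx.2
  have := hx.1
  unfold bern
  positivity

lemma sum_bern (n : ℕ) (x : ℝ) : ∑ l ∈ range (n + 1), bern n l x = 1 := by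
  simpa [Polynomial.eval_finsetSum, bern_eq_eval] using
    congrArg (Polynomial.eval x) (bernsteinPolynomial.sum ℝ n)

lemma sum_mul_bern (n : ℕ) (x : ℝ) : ∑ l ∈ range (n + 1), bern n l x * l = n * x := by
  simpa [Polynomial.eval_finsetSum, bern_eq_eval, nsmul_eq_mul, mul_comm] using
    congrArg (Polynomial.eval x) (bernsteinPolynomial.sum_smul ℝ n)

lemma sum_mul_sq_bern (n : ℕ) (x : ℝ) :
    ∑ l ∈ range (n + 1), bern n l x * (n * x - l) ^ 2 = n * x * (1 - x) := by
  simpa [Polynomial.eval_finsetSum, bern_eq_eval, nsmul_eq_mul, mul_comm] using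
    congrArg (Polynomial.eval x) (bernsteinPolynomial.variance ℝ n)

lemma sum_bern_mul_div_sub (n : ℕ) (M x : ℝ) :
    ∑ l ∈ range (n + 1), bern n l x * (l / M - n * x / M) = 0 := by
  simp only [mul_sub, sum_sub_distrib, ← sum_mul, ← mul_div_assoc, ← sum_div, sum_mul_bern,
    sum_bern, one_mul, sub_self]

lemma sum_bern_mul_div_sub_sq (n : ℕ) {M : ℝ} (hM : M ≠ 0) (x : ℝ) :
    ∑ l ∈ range (n + 1), bern n l x * (l / M - n * x / M) ^ 2 = n * x * (1 - x) / M ^ 2 := by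
  rw [← sum_mul_sq_bern, sum_div]
  refine sum_congr rfl fun l _ => ?_
  field_simp
  ring

lemma abs_sum_bern_mul_sub_le_omega2 {f : ℝ → ℝ} (hf : ContinuousOn f (Icc 0 1)) {n m : ℕ}
    (hm : 0 < m) (hnm : n ≤ m) {x : ℝ} (hx : x ∈ Icc (0:ℝ) 1) :
    |∑ l ∈ range (n + 1), bern n l x * f (l / m) - f (n * x / m)| ≤
      3 / 2 * omega2 f (sigm x / Real.sqrt m) := by
  have hm' : (0:ℝ) < m := Nat.cast_pos.2 hm
  have hw : ∀ l ∈ range (n + 1), 0 ≤ bern n l x := fun l _ => bern_nonneg hx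
  have hy : ∀ l ∈ range (n + 1), (l:ℝ) / m ∈ Icc (0:ℝ) 1 := fun l hl => by
    have : l ≤ m := by simp at hl; omega
    exact ⟨by positivity, (div_le_one hm').2 (Nat.cast_le.2 this)⟩
  have hvar := sum_bern_mul_div_sub_sq n hm'.ne' x
  rw [← one_mul (f (n * x / m)), ← sum_bern n x, sum_mul, ← sum_sub_distrib]
  simp only [← mul_sub]
  rcases (mul_nonneg hx.1 (sub_nonneg.2 hx.2)).eq_or_lt with hσ | hσ
  · rw [sum_mul_sub_eq_zero_of_sum_mul_sq_eq_zero f hw (by rw [hvar, mul_assoc, ← hσ]; simp),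
      abs_zero]
    exact mul_nonneg (by norm_num)
      (omega2_nonneg hf (div_nonneg (Real.sqrt_nonneg _) (Real.sqrt_nonneg _)))
  have hh : 0 < sigm x / Real.sqrt m := div_pos (Real.sqrt_pos.2 hσ) (Real.sqrt_pos.2 hm')
  have hh2 : (sigm x / Real.sqrt m) ^ 2 = x * (1 - x) / m := by
    rw [div_pow, sigm, Real.sq_sqrt hσ.le, Real.sq_sqrt hm'.le]
  refine (abs_sum_mul_sub_le_omega2 hf hh hw hy (sum_bern_mul_div_sub n m x)).trans
    (mul_le_mul_of_nonneg_right ?_ (omega2_nonneg hf hh.le))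
  have hweight : ∑ l ∈ range (n + 1), bern n l x * (1 + ((l:ℝ) / m - n * x / m) ^ 2 /
      (2 * (sigm x / Real.sqrt m) ^ 2)) = 1 + (n:ℝ) / (2 * m) := by
    simp only [mul_add, mul_one, sum_add_distrib, sum_bern, ← mul_div_assoc, ← sum_div, hvar, hh2]
    field_simp
    rw [mul_assoc, mul_div_assoc, div_self hσ.ne', mul_one]
  rw [hweight, ← sub_nonneg]
  have : (n:ℝ) ≤ m := Nat.cast_le.2 hnm
  field_simp
  linarith

lemma abs_integral_sub_le_nat_mul_omega1 {f : ℝ → ℝ} (hf : ContinuousOn f (Icc 0 1))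
    {μ : Measure ℝ} [IsProbabilityMeasure μ] {k m l : ℕ} (hμ : μ (Icc (0:ℝ) k) = 1)
    (hm : 0 < m) (hl : l + k ≤ m) :
    |∫ t, f ((l + t) / m) ∂μ - f (l / m)| ≤ k * omega1 f (1 / m) := by
  have hm' : (0:ℝ) < m := Nat.cast_pos.2 hm
  have hlkm : (l:ℝ) + k ≤ m := by exact_mod_cast hl
  have hae : ∀ᵐ t ∂μ, t ∈ Icc (0:ℝ) k := ae_iff.2 ((prob_compl_eq_zero_iff measurableSet_Icc).2 hμ)
  have hmem : MapsTo (fun t : ℝ => (l + t) / m) (Icc 0 k) (Icc 0 1) := fun t ht =>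
    ⟨div_nonneg (by linarith [ht.1]) hm'.le, (div_le_one hm').2 (by linarith [ht.2])⟩
  have hint : Integrable (fun t => f ((l + t) / m)) μ := by
    rw [← Measure.restrict_eq_self_of_ae_mem hae]
    exact (hf.comp (by fun_prop) hmem).integrableOn_compact isCompact_Icc
  have hl0 : (l:ℝ) / m ∈ Icc (0:ℝ) 1 := by simpa using hmem ⟨le_rfl, Nat.cast_nonneg k⟩
  have hconst : f (l / m) = ∫ _, f (l / m) ∂μ := by simp
  rw [hconst, ← integral_sub hint (integrable_const _), ← Real.norm_eq_abs]
  refine (norm_integral_le_of_norm_le_const (C := k * omega1 f (1 / m)) ?_).trans_eq (by simp)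
  filter_upwards [hae] with t ht
  refine abs_sub_le_nat_mul_omega1 hf k (hmem ht) hl0 ?_
  rw [← sub_div, add_sub_cancel_left, abs_of_nonneg (div_nonneg ht.1 hm'.le), mul_one_div]
  exact div_le_div_of_nonneg_right ht.2 hm'.le

theorem kantorovich_pointwise_bound (k m : ℕ) (hkm : k < m)
    (μ : Measure ℝ) [IsProbabilityMeasure μ] (hμ : μ (Set.Icc (0:ℝ) k) = 1)
    (f : ℝ → ℝ) (hf : ContinuousOn f (Set.Icc 0 1))
    (x : ℝ) (hx : x ∈ Set.Icc (0:ℝ) 1) :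
    |Lop m k μ f x - f x| ≤
      2 * k * omega1 f (1 / m) + (3 / 2) * omega2 f (sigm x / Real.sqrt m) := by
  set n := m - k with hn
  have hm : 0 < m := by omega
  have hm' : (0:ℝ) < m := Nat.cast_pos.2 hm
  have hnm : (n:ℝ) = m - k := Nat.cast_sub hkm.le
  set c := n * x / m
  have hsplit : Lop m k μ f x - f x =
      ∑ l ∈ range (n + 1), bern n l x * (∫ t, f ((l + t) / m) ∂μ - f (l / m)) +
      (∑ l ∈ range (n + 1), bern n l x * f (l / m) - f c) + (f c - f x) := by
    simp only [Lop, ← hn, mul_sub, sum_sub_distrib]; ring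
  have hsmooth : |∑ l ∈ range (n + 1), bern n l x * (∫ t, f ((l + t) / m) ∂μ - f (l / m))| ≤
      k * omega1 f (1 / m) :=
    abs_sum_mul_le_of_sum_eq_one (fun l _ => bern_nonneg hx) (sum_bern n x) fun l hl =>
      abs_integral_sub_le_nat_mul_omega1 hf hμ hm (by simp at hl; omega)
  have hbern := abs_sum_bern_mul_sub_le_omega2 hf hm (m.sub_le k) hx
  have hshift : |f c - f x| ≤ k * omega1 f (1 / m) := by
    have hc : c ∈ Icc (0:ℝ) 1 :=
      ⟨div_nonneg (mul_nonneg n.cast_nonneg hx.1) hm'.le, (div_le_one hm').2 (by nlinarith [hx.2])⟩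
    refine abs_sub_le_nat_mul_omega1 hf k hc hx ?_
    rw [show c - x = -(k * x / m) by simp only [c, hnm]; field_simp; ring, abs_neg,
      abs_of_nonneg (by have := hx.1; positivity), mul_one_div]
    exact div_le_div_of_nonneg_right (mul_le_of_le_one_right k.cast_nonneg hx.2) hm'.le
  rw [hsplit]
  refine (abs_add_three _ _ _).trans ?_
  linarith
end

section
/- Let X₁, …, X_n be i.i.d. random variables uniformly distributed on [0,1], so that F(x) = x on [0,1]. Then for every x ∈ (0,1) and δ > 0, P( |B_2(Y_n;x) − x| ≥ 4x(1−x)δ ) ≤ 2 e^{−n τ(8δ)/4}, and moreover if 0 < δ ≤ 1/8 the right-hand side is at most 2 exp( −8nδ²(1 − (8/3)δ) ). -/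
open Set Finset MeasureTheory ProbabilityTheory

/-- Empirical distribution function `Y_n(x) = (1/n) Σ_r 1{X_r ≤ x}`. -/
noncomputable def empY {Ω : Type*} (n : ℕ) (X : Fin n → Ω → ℝ) (x : ℝ) (ω : Ω) : ℝ :=
  (1 / n : ℝ) * ∑ r, (if X r ω ≤ x then (1 : ℝ) else 0)

/-- Random Bernstein polynomial `B_m(Y_n;x)`, as a function of `x` for each `ω`. -/
noncomputable def BY {Ω : Type*} (m n : ℕ) (X : Fin n → Ω → ℝ) (ω : Ω) (x : ℝ) : ℝ :=
  ∑ k ∈ Finset.range (m + 1), empY n X ((k : ℝ) / m) ω * bern m k x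

/-- `τ(ε) = (1+ε) log(1+ε) - ε`. -/
noncomputable def tau (ε : ℝ) : ℝ := (1 + ε) * Real.log (1 + ε) - ε

/-! Almost surely every `X r` lies in `(0, 1]`, so `Y_n(0) = 0`, `Y_n(1) = 1` and
`B_2(Y_n;x) - x = 2x(1-x)(Y_n(1/2) - 1/2)`. The event is therefore `|Y_n(1/2) - 1/2| ≥ 2δ`, and
`n (Y_n(1/2) - 1/2) = ∑ r, (1{X r ≤ 1/2} - 1/2)` is a sum of independent centred variables with
values in `[-1/2, 1/2]`, so Hoeffding's inequality bounds its probability by `2 exp(-8nδ²)`.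
Both stated bounds then follow from `y²/2 - y³/6 ≤ τ(y) ≤ y²/2` for `y ≥ 0`. -/

open Real
open scoped NNReal

lemma le_of_eq_at_zero_of_hasDerivAt_le {f g f' g' : ℝ → ℝ}
    (hf : ∀ y, 0 ≤ y → HasDerivAt f (f' y) y) (hg : ∀ y, 0 ≤ y → HasDerivAt g (g' y) y)
    (h₀ : f 0 = g 0) (h' : ∀ y, 0 < y → f' y ≤ g' y) {x : ℝ} (hx : 0 ≤ x) : f x ≤ g x := by
  have hderiv : ∀ y, 0 ≤ y → HasDerivAt (g - f) (g' y - f' y) y :=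
    fun y hy ↦ (hg y hy).sub (hf y hy)
  have hmono : MonotoneOn (g - f) (Ici 0) := by
    refine monotoneOn_of_hasDerivWithinAt_nonneg (f' := g' - f') (convex_Ici 0)
      (fun y hy ↦ (hderiv y hy).continuousAt.continuousWithinAt) (fun y hy ↦ ?_) (fun y hy ↦ ?_)
    all_goals rw [interior_Ici] at hy
    · exact (hderiv y (le_of_lt hy)).hasDerivWithinAt
    · exact sub_nonneg.2 (h' y hy)
  simpa [h₀] using hmono self_mem_Ici hx hx

lemma hasDerivAt_log_one_add {y : ℝ} (hy : -1 < y) :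
    HasDerivAt (fun z ↦ log (1 + z)) (1 + y)⁻¹ y := by
  simpa using ((hasDerivAt_id y).const_add 1).log (by simp; linarith)

lemma hasDerivAt_tau {y : ℝ} (hy : -1 < y) : HasDerivAt tau (log (1 + y)) y := by
  have h : HasDerivAt (fun z ↦ (1 + z) * log (1 + z) - z)
      (1 * log (1 + y) + (1 + y) * (1 + y)⁻¹ - 1) y :=
    (((hasDerivAt_id' y).const_add 1).mul (hasDerivAt_log_one_add hy)).sub (hasDerivAt_id' y)
  rwa [mul_inv_cancel₀ (by linarith), one_mul, add_sub_cancel_right] at h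

lemma sub_sq_div_two_le_log_one_add {y : ℝ} (hy : 0 ≤ y) : y - y ^ 2 / 2 ≤ log (1 + y) := by
  refine le_of_eq_at_zero_of_hasDerivAt_le (f := fun z ↦ z - z ^ 2 / 2) (g := fun z ↦ log (1 + z))
    (f' := fun z ↦ 1 - z) (fun z _ ↦ ?_) (fun z hz ↦ hasDerivAt_log_one_add (by linarith))
    (by simp) (fun z hz ↦ ?_) hy
  · exact ((hasDerivAt_id z).sub ((hasDerivAt_pow 2 z).div_const 2)).congr_deriv (by simp)
  · rw [← one_div, le_div_iff₀ (by linarith)]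
    nlinarith

lemma tau_le_sq_div_two {y : ℝ} (hy : 0 ≤ y) : tau y ≤ y ^ 2 / 2 := by
  refine le_of_eq_at_zero_of_hasDerivAt_le (g := fun z ↦ z ^ 2 / 2) (g' := id)
    (fun z hz ↦ hasDerivAt_tau (by linarith)) (fun z _ ↦ ?_) (by simp [tau]) (fun z hz ↦ ?_) hy
  · simpa using (hasDerivAt_pow 2 z).div_const 2
  · simpa [add_comm] using log_le_sub_one_of_pos (by linarith : 0 < 1 + z)

lemma sq_div_two_sub_cube_div_six_le_tau {y : ℝ} (hy : 0 ≤ y) :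
    y ^ 2 / 2 - y ^ 3 / 6 ≤ tau y := by
  refine le_of_eq_at_zero_of_hasDerivAt_le (f := fun z ↦ z ^ 2 / 2 - z ^ 3 / 6)
    (f' := fun z ↦ z - z ^ 2 / 2) (fun z _ ↦ ?_) (fun z hz ↦ hasDerivAt_tau (by linarith))
    (by simp [tau]) (fun z hz ↦ sub_sq_div_two_le_log_one_add hz.le) hy
  exact (((hasDerivAt_pow 2 z).div_const 2).sub ((hasDerivAt_pow 3 z).div_const 6)).congr_deriv
    (by ring)

section Hoeffding

variable {Ω ι : Type*} [MeasurableSpace Ω] {μ : Measure Ω}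

lemma measureReal_abs_sum_ge_le_of_iIndepFun {X : ι → Ω → ℝ} (h_indep : iIndepFun X μ)
    {c : ℝ≥0} {s : Finset ι} (h_subG : ∀ i ∈ s, HasSubgaussianMGF (X i) c μ) {ε : ℝ}
    (hε : 0 ≤ ε) :
    μ.real {ω | ε ≤ |∑ i ∈ s, X i ω|} ≤ 2 * exp (-ε ^ 2 / (2 * (#s * c))) := by
  have h_upper := HasSubgaussianMGF.measure_sum_ge_le_of_iIndepFun h_indep h_subG hε
  have h_lower := HasSubgaussianMGF.measure_sum_ge_le_of_iIndepFun
    (h_indep.comp (fun _ ↦ Neg.neg) (fun _ ↦ measurable_neg)) (fun i hi ↦ (h_subG i hi).neg) hε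
  simp only [Finset.sum_const, nsmul_eq_mul, Function.comp_apply, Finset.sum_neg_distrib]
    at h_upper h_lower
  simp_rw [le_abs, Set.ofPred_or]
  exact (measureReal_union_le _ _).trans (by push_cast at *; linarith)

lemma hasSubgaussianMGF_ite_sub_measureReal [IsProbabilityMeasure μ] {p : Ω → Prop}
    [DecidablePred p] (hp : MeasurableSet {ω | p ω}) :
    HasSubgaussianMGF (fun ω ↦ (if p ω then (1 : ℝ) else 0) - μ.real {ω | p ω}) (1 / 4) μ := by
  have h := hasSubgaussianMGF_of_mem_Icc (μ := μ) (X := {ω | p ω}.indicator 1) (a := 0) (b := 1)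
    (by fun_prop (disch := exact hp))
    (ae_of_all _ fun ω ↦ ⟨Set.indicator_nonneg (fun _ _ ↦ zero_le_one) ω,
      Set.indicator_le_self' (fun _ _ ↦ zero_le_one) ω⟩)
  rw [integral_indicator_one hp] at h
  convert h using 2
  · simp [Set.indicator_apply]
  · ext; norm_num

end Hoeffding

section EmpiricalBernstein

variable {Ω : Type*} {n : ℕ} {X : Fin n → Ω → ℝ} {ω : Ω}

lemma BY_two_eq (x : ℝ) :
    BY 2 n X ω x = empY n X 0 ω * (1 - x) ^ 2 + empY n X (1 / 2) ω * (2 * x * (1 - x))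
      + empY n X 1 ω * x ^ 2 := by
  simp [BY, bern, Finset.sum_range_succ]

lemma empY_eq_zero_of_forall_lt {y : ℝ} (h : ∀ r, y < X r ω) : empY n X y ω = 0 := by
  simp [empY, fun r ↦ not_le.2 (h r)]

lemma empY_eq_one_of_forall_le (hn : n ≠ 0) {y : ℝ} (h : ∀ r, X r ω ≤ y) :
    empY n X y ω = 1 := by
  simp [empY, h, hn]

lemma sum_ite_le_sub_eq_mul_empY_sub (y p : ℝ) :
    ∑ r, ((if X r ω ≤ y then (1 : ℝ) else 0) - p) = n * (empY n X y ω - p) := by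
  rcases eq_or_ne n 0 with rfl | hn
  · simp
  · simp [empY, Finset.sum_sub_distrib, Finset.card_univ]
    field_simp

lemma BY_two_sub_self (hn : n ≠ 0) (h₀ : ∀ r, 0 < X r ω) (h₁ : ∀ r, X r ω ≤ 1) (x : ℝ) :
    BY 2 n X ω x - x = 2 * x * (1 - x) * (empY n X (1 / 2) ω - 1 / 2) := by
  rw [BY_two_eq, empY_eq_zero_of_forall_lt h₀, empY_eq_one_of_forall_le hn h₁]
  ring

end EmpiricalBernstein

lemma measureReal_abs_empY_sub_ge_le {Ω : Type*} [MeasurableSpace Ω] {μ : Measure Ω}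
    [IsProbabilityMeasure μ] {n : ℕ} (hn : n ≠ 0) {X : Fin n → Ω → ℝ}
    (hmeas : ∀ r, Measurable (X r)) (hindep : iIndepFun X μ) {y p : ℝ}
    (hp : ∀ r, μ.real {ω | X r ω ≤ y} = p) {ε : ℝ} (hε : 0 ≤ ε) :
    μ.real {ω | ε ≤ |empY n X y ω - p|} ≤ 2 * exp (-(2 * n * ε ^ 2)) := by
  set ξ : Fin n → Ω → ℝ := fun r ω ↦ (if X r ω ≤ y then (1 : ℝ) else 0) - p
  have h_indep : iIndepFun ξ μ :=
    hindep.comp (fun _ z ↦ (if z ≤ y then (1 : ℝ) else 0) - p)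
      (fun _ ↦ (Measurable.ite measurableSet_Iic measurable_const measurable_const).sub_const _)
  have h_subG : ∀ r ∈ Finset.univ, HasSubgaussianMGF (ξ r) (1 / 4) μ := fun r _ ↦ by
    simpa only [hp r] using hasSubgaussianMGF_ite_sub_measureReal (μ := μ)
      (p := fun ω ↦ X r ω ≤ y) (measurableSet_le (hmeas r) measurable_const)
  have hn' : (0 : ℝ) < n := by positivity
  have h_event : {ω | ε ≤ |empY n X y ω - p|} = {ω | n * ε ≤ |∑ r, ξ r ω|} := by
    ext ω
    simp only [Set.mem_ofPred_eq]
    rw [sum_ite_le_sub_eq_mul_empY_sub, abs_mul, Nat.abs_cast, mul_le_mul_iff_right₀ hn']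
  rw [h_event]
  convert measureReal_abs_sum_ge_le_of_iIndepFun h_indep h_subG
    (ε := n * ε) (by positivity) using 3
  rw [Finset.card_univ, Fintype.card_fin]
  push_cast
  field_simp
  ring

theorem uniform_pointwise_concentration
    {Ω : Type*} [MeasurableSpace Ω] (P : Measure Ω) [IsProbabilityMeasure P]
    (n : ℕ) (hn : 2 ≤ n) (X : Fin n → Ω → ℝ)
    (hmeas : ∀ r, Measurable (X r))
    (hindep : iIndepFun X P)
    (hval : ∀ r ω, X r ω ∈ Set.Icc (0:ℝ) 1)
    (hunif : ∀ r, ∀ x ∈ Set.Icc (0:ℝ) 1, (P {ω | X r ω ≤ x}).toReal = x)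
    (x : ℝ) (hx : x ∈ Set.Ioo (0:ℝ) 1) (δ : ℝ) (hδ : 0 < δ) :
    P {ω | |BY 2 n X ω x - x| ≥ 4 * x * (1 - x) * δ} ≤
        ENNReal.ofReal (2 * Real.exp (-(n * tau (8 * δ) / 4))) ∧
      (δ ≤ 1 / 8 →
        2 * Real.exp (-(n * tau (8 * δ) / 4)) ≤
          2 * Real.exp (-(8 * n * δ ^ 2 * (1 - (8 / 3) * δ)))) := by
  have hx' : 0 < 2 * x * (1 - x) := by nlinarith [hx.1, hx.2]
  have h_pos : ∀ᵐ ω ∂P, ∀ r, 0 < X r ω := ae_all_iff.2 fun r ↦ by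
    have h_null : P {ω | X r ω ≤ 0} = 0 :=
      (measureReal_eq_zero_iff).1 (hunif r 0 ⟨le_rfl, zero_le_one⟩)
    exact ae_iff.2 (by simpa only [not_lt] using h_null)
  have h_event : ∀ᵐ ω ∂P,
      4 * x * (1 - x) * δ ≤ |BY 2 n X ω x - x| → 2 * δ ≤ |empY n X (1 / 2) ω - 1 / 2| := by
    filter_upwards [h_pos] with ω hω hE
    rw [BY_two_sub_self (by omega) hω (fun r ↦ (hval r ω).2), abs_mul, abs_of_pos hx'] at hE
    exact le_of_mul_le_mul_left (by linarith) hx'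
  refine ⟨?_, fun _ ↦ ?_⟩
  · calc P {ω | |BY 2 n X ω x - x| ≥ 4 * x * (1 - x) * δ}
        ≤ P {ω | 2 * δ ≤ |empY n X (1 / 2) ω - 1 / 2|} := measure_mono_ae h_event
      _ ≤ ENNReal.ofReal (2 * exp (-(2 * n * (2 * δ) ^ 2))) := by
        rw [← ofReal_measureReal]
        exact ENNReal.ofReal_le_ofReal <| measureReal_abs_empY_sub_ge_le (by omega) hmeas hindep
          (fun r ↦ hunif r _ ⟨by norm_num, by norm_num⟩) (by positivity)
      _ ≤ ENNReal.ofReal (2 * exp (-(n * tau (8 * δ) / 4))) := by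
        gcongr
        nlinarith [tau_le_sq_div_two (y := 8 * δ) (by positivity)]
  · gcongr
    nlinarith [sq_div_two_sub_cube_div_six_le_tau (y := 8 * δ) (by positivity)]
end
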